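/- arXiv:2011.01435 — 6 statements merged into one kernel-verified Lean document; each statement's English description precedes it below -/
import Mathlib

section
/- If ψ : ℝ₊^m → ℝ₊ is convex, differentiable, non-decreasing, satisfies ψ(0) = 0, and has growth of order at most p > 1, then its Fenchel conjugate ψ* satisfies ψ*(δy) ≤ δ^{p/(p-1)} ψ*(y) for every vector y and every scalar δ ∈ (0,1]. -/
/-!
For `α ≥ 1` and `u ≥ 0` the function `t ↦ α ^ p ψ(t u) - ψ(t α u)` vanishes at `0` and is
non-decreasing on `[0, ∞)`: its derivative `α ^ p ⟨∇ψ(t u), u⟩ - α ⟨∇ψ(α t u), u⟩` is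
non-negative by the growth condition on `∇ψ`. At `t = 1` this gives `ψ(α u) ≤ α ^ p ψ(u)`.

Given this homogeneity bound, write `δ = β ^ (p - 1)` with `β ∈ (0, 1]` and substitute
`u = β v` in the supremum defining `ψ*(δ y)`: since `β δ = β ^ p = δ ^ (p / (p - 1))` and
`ψ(u) ≥ β ^ p ψ(v)`, each term is at most `δ ^ (p / (p - 1)) (⟨v, y⟩ - ψ(v))`.
-/

open Finset

/-- Fenchel conjugate over the non-negative orthant. -/
noncomputable def conjStar {m : ℕ} (ψ : (Fin m → ℝ) → ℝ) (y : Fin m → ℝ) : ℝ :=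
  sSup {z : ℝ | ∃ u : Fin m → ℝ, 0 ≤ u ∧ z = (∑ i, u i * y i) - ψ u}

lemma hasDerivAt_apply_smul_const {E F : Type*} [NormedAddCommGroup E] [NormedSpace ℝ E]
    [NormedAddCommGroup F] [NormedSpace ℝ F] {f : E → F} {f' : E →L[ℝ] F} {u : E} {t : ℝ}
    (hf : HasFDerivAt f f' (t • u)) : HasDerivAt (fun s : ℝ => f (s • u)) (f' u) t := by
  have h := hf.comp_hasDerivAt t ((hasDerivAt_id' t).smul_const u)
  rw [one_smul] at h
  exact h

lemma sum_smul_proj_apply {m : ℕ} (c v : Fin m → ℝ) :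
    (∑ i, c i • (ContinuousLinearMap.proj i : (Fin m → ℝ) →L[ℝ] ℝ)) v = ∑ i, c i * v i := by
  simp

lemma apply_smul_le_rpow_mul {m : ℕ} {p : ℝ} {ψ : (Fin m → ℝ) → ℝ}
    {g : (Fin m → ℝ) → (Fin m → ℝ)}
    (hdiff : ∀ u : Fin m → ℝ, 0 ≤ u →
      HasFDerivAt ψ (∑ i, g u i • (ContinuousLinearMap.proj i : (Fin m → ℝ) →L[ℝ] ℝ)) u)
    (hzero : ψ 0 = 0)
    (hgrowth : ∀ u : Fin m → ℝ, 0 ≤ u → ∀ α : ℝ, 1 ≤ α → ∀ i, g (α • u) i ≤ α ^ (p - 1) * g u i)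
    {u : Fin m → ℝ} (hu : 0 ≤ u) {α : ℝ} (hα : 1 ≤ α) :
    ψ (α • u) ≤ α ^ p * ψ u := by
  have hα_pos : 0 < α := one_pos.trans_le hα
  have hline : ∀ w : Fin m → ℝ, 0 ≤ w → ∀ t : ℝ, 0 ≤ t →
      HasDerivAt (fun s : ℝ => ψ (s • w)) (∑ i, g (t • w) i * w i) t := fun w hw t ht => by
    simpa only [sum_smul_proj_apply] using
      hasDerivAt_apply_smul_const (hdiff (t • w) (smul_nonneg ht hw))
  have hαu : 0 ≤ α • u := smul_nonneg hα_pos.le hu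
  have hderiv : ∀ t : ℝ, 0 ≤ t → HasDerivAt (fun s : ℝ => α ^ p * ψ (s • u) - ψ (s • α • u))
      (α ^ p * ∑ i, g (t • u) i * u i - ∑ i, g (t • α • u) i * (α • u) i) t :=
    fun t ht => ((hline u hu t ht).const_mul _).sub (hline _ hαu t ht)
  have hslope_le : ∀ t : ℝ, 0 ≤ t →
      ∑ i, g (t • α • u) i * (α • u) i ≤ α ^ p * ∑ i, g (t • u) i * u i := by
    intro t ht
    rw [mul_sum]
    refine sum_le_sum fun i _ => ?_
    have hg : g (α • t • u) i ≤ α ^ p / α * g (t • u) i := by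
      rw [← Real.rpow_sub_one hα_pos.ne']
      exact hgrowth _ (smul_nonneg ht hu) α hα i
    calc g (t • α • u) i * (α • u) i = g (α • t • u) i * (α * u i) := by rw [smul_comm t α u]; rfl
      _ ≤ α ^ p / α * g (t • u) i * (α * u i) :=
          mul_le_mul_of_nonneg_right hg (mul_nonneg hα_pos.le (hu i))
      _ = α ^ p * (g (t • u) i * u i) := by field_simp
  have hmono : MonotoneOn (fun s : ℝ => α ^ p * ψ (s • u) - ψ (s • α • u)) (Set.Ici 0) :=
    monotoneOn_of_hasDerivWithinAt_nonneg (convex_Ici 0)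
      (fun t ht => (hderiv t ht).continuousAt.continuousWithinAt)
      (fun t ht => (hderiv t (interior_subset ht)).hasDerivWithinAt)
      (fun t ht => sub_nonneg.mpr (hslope_le t (interior_subset ht)))
  have h01 := hmono Set.self_mem_Ici (Set.mem_Ici.mpr zero_le_one) zero_le_one
  simp only [zero_smul, hzero, mul_zero, sub_zero, one_smul] at h01
  linarith

lemma conjStar_rpow_smul_le {m : ℕ} {p β : ℝ} {ψ : (Fin m → ℝ) → ℝ} {y : Fin m → ℝ}
    (hhom : ∀ u : Fin m → ℝ, 0 ≤ u → ∀ α : ℝ, 1 ≤ α → ψ (α • u) ≤ α ^ p * ψ u)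
    (hbdd : BddAbove {z : ℝ | ∃ u : Fin m → ℝ, 0 ≤ u ∧ z = (∑ i, u i * y i) - ψ u})
    (hβ : 0 < β) (hβ1 : β ≤ 1) :
    conjStar ψ (β ^ (p - 1) • y) ≤ β ^ p * conjStar ψ y := by
  refine csSup_le ⟨_, 0, le_rfl, rfl⟩ ?_
  rintro _ ⟨u, hu, rfl⟩
  set v := β⁻¹ • u
  have hβp : 0 < β ^ p := Real.rpow_pos_of_pos hβ p
  have hψ : β ^ p * ψ v ≤ ψ u := by
    have h := hhom u hu β⁻¹ (one_le_inv₀ hβ |>.mpr hβ1)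
    rw [Real.inv_rpow hβ.le, ← div_eq_inv_mul, le_div_iff₀ hβp] at h
    linarith
  have hsum : ∑ i, u i * (β ^ (p - 1) • y) i = β ^ p * ∑ i, v i * y i := by
    rw [mul_sum]
    refine sum_congr rfl fun i _ => ?_
    simp only [v, Pi.smul_apply, smul_eq_mul, Real.rpow_sub_one hβ.ne']
    field_simp
  have hv : (∑ i, v i * y i) - ψ v ≤ conjStar ψ y :=
    le_csSup hbdd ⟨v, smul_nonneg (inv_nonneg.mpr hβ.le) hu, rfl⟩
  calc (∑ i, u i * (β ^ (p - 1) • y) i) - ψ u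
      ≤ β ^ p * ((∑ i, v i * y i) - ψ v) := by rw [hsum]; linarith
    _ ≤ β ^ p * conjStar ψ y := mul_le_mul_of_nonneg_left hv hβp.le

theorem stmt1_general {m : ℕ} (p : ℝ) (hp : 1 < p)
    (ψ : (Fin m → ℝ) → ℝ) (g : (Fin m → ℝ) → (Fin m → ℝ))
    (hdiff : ∀ u : Fin m → ℝ, 0 ≤ u →
      HasFDerivAt ψ (∑ i, g u i • (ContinuousLinearMap.proj i : (Fin m → ℝ) →L[ℝ] ℝ)) u)
    (hzero : ψ 0 = 0)
    (hgrowth : ∀ u : Fin m → ℝ, 0 ≤ u → ∀ α : ℝ, 1 ≤ α → ∀ i, g (α • u) i ≤ α ^ (p - 1) * g u i)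
    (hbdd : ∀ y : Fin m → ℝ, BddAbove {z : ℝ | ∃ u : Fin m → ℝ, 0 ≤ u ∧ z = (∑ i, u i * y i) - ψ u}) :
    ∀ (y : Fin m → ℝ) (δ : ℝ), 0 < δ → δ ≤ 1 →
      conjStar ψ (δ • y) ≤ δ ^ (p / (p - 1)) * conjStar ψ y := by
  intro y δ hδ hδ1
  have hp1 : p - 1 ≠ 0 := by linarith
  set β := δ ^ (p - 1)⁻¹
  have hβ : 0 < β := Real.rpow_pos_of_pos hδ _
  have hβ1 : β ≤ 1 := Real.rpow_le_one hδ.le hδ1 (inv_nonneg.mpr (by linarith))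
  have hβ_sub : β ^ (p - 1) = δ := by
    rw [← Real.rpow_mul hδ.le, inv_mul_cancel₀ hp1, Real.rpow_one]
  have hβ_pow : β ^ p = δ ^ (p / (p - 1)) := by
    rw [← Real.rpow_mul hδ.le, inv_mul_eq_div]
  have h := conjStar_rpow_smul_le
    (fun u hu α hα => apply_smul_le_rpow_mul hdiff hzero hgrowth hu hα) (hbdd y) hβ hβ1
  rwa [hβ_sub, hβ_pow] at h

/-- under convexity, differentiability, monotonicity, ψ(0)=0 and growth of order
at most p > 1, the Fenchel conjugate satisfies ψ*(δy) ≤ δ^{p/(p-1)} ψ*(y) for δ ∈ (0,1]. -/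
theorem stmt1 {m : ℕ} (p : ℝ) (hp : 1 < p)
    (ψ : (Fin m → ℝ) → ℝ) (g : (Fin m → ℝ) → (Fin m → ℝ))
    (hψnonneg : ∀ u : Fin m → ℝ, 0 ≤ u → 0 ≤ ψ u)
    (hconv : ConvexOn ℝ {u : Fin m → ℝ | 0 ≤ u} ψ)
    (hdiff : ∀ u : Fin m → ℝ, 0 ≤ u →
      HasFDerivAt ψ (∑ i, g u i • (ContinuousLinearMap.proj i : (Fin m → ℝ) →L[ℝ] ℝ)) u)
    (hmono : ∀ u v : Fin m → ℝ, 0 ≤ u → u ≤ v → ψ u ≤ ψ v)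
    (hzero : ψ 0 = 0)
    (hgrowth : ∀ u : Fin m → ℝ, 0 ≤ u → ∀ α : ℝ, 1 ≤ α → ∀ i, g (α • u) i ≤ α ^ (p - 1) * g u i)
    (hbdd : ∀ y : Fin m → ℝ, BddAbove {z : ℝ | ∃ u : Fin m → ℝ, 0 ≤ u ∧ z = (∑ i, u i * y i) - ψ u}) :
    ∀ (y : Fin m → ℝ) (δ : ℝ), 0 < δ → δ ≤ 1 →
      conjStar ψ (δ • y) ≤ δ ^ (p / (p - 1)) * conjStar ψ y :=
  stmt1_general p hp ψ g hdiff hzero hgrowth hbdd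
end

section
/- Let ψ : ℝ₊^m → ℝ₊ be convex, differentiable, with ψ(0) = 0, and with growth of order at most p > 1 (coordinatewise ∇ψ(αu) ≤ α^{p-1} ∇ψ(u) for α ≥ 1). Then for every u ≥ 0, ⟨∇ψ(u), u⟩ ≤ p · ψ(u). -/
open Finset Set

/-!
Along the ray `φ t = ψ (t • u)` the growth condition, applied at `t • u` with `α = t⁻¹`, gives
`φ' t ≥ t ^ (p - 1) φ' 1` on `(0, 1]`. Hence `t ↦ φ t - t ^ p φ' 1 / p` is nondecreasing on
`[0, 1]`, and comparing its values at `0` and `1` gives `φ' 1 ≤ p φ 1`.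
-/

theorem le_mul_of_rpow_sub_one_mul_le_deriv {φ φ' : ℝ → ℝ} {p c : ℝ} (hp : 0 < p)
    (hcont : ContinuousOn φ (Icc 0 1)) (hderiv : ∀ t ∈ Ioo (0 : ℝ) 1, HasDerivAt φ (φ' t) t)
    (hzero : φ 0 = 0) (hbound : ∀ t ∈ Ioo (0 : ℝ) 1, t ^ (p - 1) * c ≤ φ' t) :
    c ≤ p * φ 1 := by
  set F : ℝ → ℝ := fun t => φ t - c / p * t ^ p
  have hFcont : ContinuousOn F (Icc 0 1) :=
    hcont.sub (continuousOn_const.mul (continuousOn_id.rpow_const fun _ _ => Or.inr hp.le))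
  have hFderiv : ∀ t ∈ Ioo (0 : ℝ) 1,
      HasDerivAt F (φ' t - c / p * (p * t ^ (p - 1))) t := fun t ht =>
    (hderiv t ht).sub ((Real.hasDerivAt_rpow_const (Or.inl ht.1.ne')).const_mul (c / p))
  have hFmono : MonotoneOn F (Icc 0 1) := by
    refine monotoneOn_of_hasDerivWithinAt_nonneg (convex_Icc 0 1) hFcont
      (fun t ht => (hFderiv t (by rwa [interior_Icc] at ht)).hasDerivWithinAt) fun t ht => ?_
    rw [interior_Icc] at ht
    have : c / p * (p * t ^ (p - 1)) = t ^ (p - 1) * c := by field_simp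
    linarith [hbound t ht]
  have h01 : F 0 ≤ F 1 := hFmono (left_mem_Icc.2 zero_le_one) (right_mem_Icc.2 zero_le_one)
    zero_le_one
  simp only [F, hzero, Real.zero_rpow hp.ne', Real.one_rpow] at h01
  rw [mul_zero, sub_zero, mul_one, sub_nonneg, div_le_iff₀ hp] at h01
  linarith

theorem hasDerivAt_comp_smul_of_hasFDerivAt {ι : Type*} [Fintype ι] {f : (ι → ℝ) → ℝ}
    {g u : ι → ℝ} {t : ℝ}
    (hf : HasFDerivAt f (∑ i, g i • (ContinuousLinearMap.proj i : (ι → ℝ) →L[ℝ] ℝ)) (t • u)) :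
    HasDerivAt (fun s : ℝ => f (s • u)) (∑ i, g i * u i) t := by
  refine (hf.comp_hasDerivAt t ((hasDerivAt_id t).smul_const u)).congr_deriv ?_
  simp

theorem rpow_sub_one_mul_le_apply_smul {ι : Type*} {g : (ι → ℝ) → (ι → ℝ)}
    {p t : ℝ} {u : ι → ℝ} (ht : 0 < t) (ht1 : t ≤ 1)
    (hgrowth : ∀ α : ℝ, 1 ≤ α → ∀ i, g (α • t • u) i ≤ α ^ (p - 1) * g (t • u) i) (i : ι) :
    t ^ (p - 1) * g u i ≤ g (t • u) i := by
  have h := hgrowth t⁻¹ ((one_le_inv₀ ht).2 ht1) i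
  rw [smul_smul, inv_mul_cancel₀ ht.ne', one_smul, Real.inv_rpow ht.le,
    ← div_eq_inv_mul, le_div_iff₀ (Real.rpow_pos_of_pos ht _), mul_comm] at h
  exact h

theorem stmt3_general {m : ℕ} (p : ℝ) (hp : 1 < p)
    (ψ : (Fin m → ℝ) → ℝ) (g : (Fin m → ℝ) → (Fin m → ℝ))
    (hdiff : ∀ u : Fin m → ℝ, 0 ≤ u →
      HasFDerivAt ψ (∑ i, g u i • (ContinuousLinearMap.proj i : (Fin m → ℝ) →L[ℝ] ℝ)) u)
    (hzero : ψ 0 = 0)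
    (hgrowth : ∀ u : Fin m → ℝ, 0 ≤ u → ∀ α : ℝ, 1 ≤ α → ∀ i, g (α • u) i ≤ α ^ (p - 1) * g u i) :
    ∀ u : Fin m → ℝ, 0 ≤ u → (∑ i, g u i * u i) ≤ p * ψ u := by
  intro u hu
  have hray : ∀ t : ℝ, 0 ≤ t → 0 ≤ t • u := fun t ht => smul_nonneg ht hu
  have hderiv : ∀ t : ℝ, 0 ≤ t →
      HasDerivAt (fun s : ℝ => ψ (s • u)) (∑ i, g (t • u) i * u i) t := fun t ht =>
    hasDerivAt_comp_smul_of_hasFDerivAt (hdiff _ (hray t ht))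
  have hbound : ∀ t ∈ Ioo (0 : ℝ) 1, t ^ (p - 1) * ∑ i, g u i * u i ≤ ∑ i, g (t • u) i * u i := by
    intro t ht
    rw [mul_sum]
    refine sum_le_sum fun i _ => ?_
    rw [← mul_assoc]
    exact mul_le_mul_of_nonneg_right (rpow_sub_one_mul_le_apply_smul ht.1 ht.2.le
      (hgrowth _ (hray t ht.1.le)) i) (hu i)
  simpa using le_mul_of_rpow_sub_one_mul_le_deriv (zero_lt_one.trans hp)
    (fun t ht => (hderiv t ht.1).continuousAt.continuousWithinAt)
    (fun t ht => hderiv t ht.1.le) (by simpa using hzero) hbound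

/-- if ψ is convex, differentiable on the non-negative orthant, ψ(0) = 0, and has
growth of order at most p > 1, then ⟨∇ψ(u), u⟩ ≤ p·ψ(u) for every u ≥ 0. -/
theorem stmt3 {m : ℕ} (p : ℝ) (hp : 1 < p)
    (ψ : (Fin m → ℝ) → ℝ) (g : (Fin m → ℝ) → (Fin m → ℝ))
    (hψnonneg : ∀ u : Fin m → ℝ, 0 ≤ u → 0 ≤ ψ u)
    (hconv : ConvexOn ℝ {u : Fin m → ℝ | 0 ≤ u} ψ)
    (hdiff : ∀ u : Fin m → ℝ, 0 ≤ u →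
      HasFDerivAt ψ (∑ i, g u i • (ContinuousLinearMap.proj i : (Fin m → ℝ) →L[ℝ] ℝ)) u)
    (hzero : ψ 0 = 0)
    (hgrowth : ∀ u : Fin m → ℝ, 0 ≤ u → ∀ α : ℝ, 1 ≤ α → ∀ i, g (α • u) i ≤ α ^ (p - 1) * g u i) :
    ∀ u : Fin m → ℝ, 0 ≤ u → (∑ i, g u i * u i) ≤ p * ψ u :=
  stmt3_general p hp ψ g hdiff hzero hgrowth
end

section
/- Let v₁, …, v_n ∈ [0,1]^m and γ₁, …, γ_n ∈ {0, γ̄} with γ̄ ≤ 1/(4p) and p ≥ 1. Define w_t = (4p·𝟙 + v₁ + … + v_{t-1}) / (4(1 + γ₁ + … + γ_{t-1} + γ̄)) and w̃_{t+1} = (4p·𝟙 + v₁ + … + v_t) / (4(1 + γ₁ + … + γ_t)). Then w_t ≤ w̃_{t+1} ≤ 2^{1/p} w_t coordinatewise. -/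
/-!
Write `S`, `G` for the sums up to `t - 1`. Passing from `w_t` to `w̃_{t+1}` multiplies the
numerator `4p + S` by at most `1 + 1/(4p)` (as `v_t ≤ 1` and `4p + S ≥ 4p`) and
divides the denominator `1 + G + γ̄` by at most `1 + γ̄ ≤ 1 + 1/(4p)` (as `γ̄ - γ_t ≤ γ̄ (1 + G + γ_t)`).
Finally `(1 + 1/(4p))² ≤ exp (1/(2p)) ≤ 2^{1/p}` because `log 2 ≥ 1/2`.
-/

open Finset Real

lemma one_add_one_div_four_mul_sq_le_two_rpow {p : ℝ} (hp : 0 < p) :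
    (1 + 1 / (4 * p)) ^ 2 ≤ (2 : ℝ) ^ (1 / p) := calc
  (1 + 1 / (4 * p)) ^ 2 ≤ exp (1 / (4 * p)) ^ 2 := by
    gcongr
    linarith [add_one_le_exp (1 / (4 * p))]
  _ = exp (1 / 2 * (1 / p)) := by
    rw [← exp_nat_mul]
    congr 1
    field_simp
    norm_num
  _ ≤ exp (log 2 * (1 / p)) := by
    gcongr
    linarith [log_two_gt_d9]
  _ = (2 : ℝ) ^ (1 / p) := (rpow_def_of_pos two_pos _).symm

lemma add_le_one_add_one_div_mul {K A c : ℝ} (hK : 0 < K) (hKA : K ≤ A) (hc : c ≤ 1) :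
    A + c ≤ (1 + 1 / K) * A := by
  have : 1 ≤ A / K := (one_le_div hK).mpr hKA
  rw [add_mul, one_mul, one_div_mul_eq_div]
  linarith

lemma one_add_add_le_one_add_mul {G g γ : ℝ} (hG : 0 ≤ G) (hg : 0 ≤ g) (hgγ : g ≤ γ) :
    1 + G + γ ≤ (1 + γ) * (1 + (G + g)) := by
  nlinarith [mul_nonneg (hg.trans hgγ) (add_nonneg hG hg)]

lemma div_le_mul_mul_div {N N' D D' a b : ℝ} (hN : N' ≤ a * N) (hD : D ≤ b * D')
    (hN0 : 0 ≤ N) (ha : 0 ≤ a) (hD0 : 0 < D) (hD'0 : 0 < D') :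
    N' / D' ≤ a * b * (N / D) := by
  rw [div_le_iff₀ hD'0]
  calc N' ≤ a * N * (D / D) := by rwa [div_self hD0.ne', mul_one]
    _ ≤ a * N * (b * D' / D) := by gcongr
    _ = a * b * (N / D) * D' := by ring

lemma sum_range_nonneg_of_lt {f : ℕ → ℝ} {t n : ℕ} (ht : t < n) (hf : ∀ s, s < n → 0 ≤ f s) :
    0 ≤ ∑ s ∈ range t, f s :=
  sum_nonneg fun s hs => hf s ((mem_range.mp hs).trans ht)

/-- with v₁,…,v_n ∈ [0,1]^m (0-indexed here: v 0, …, v (n-1)), γ_t ∈ {0, γ̄},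
0 < γ̄ ≤ 1/(4p), p ≥ 1, setting
w_t = (4p·𝟙 + v₁ + … + v_{t-1}) / (4(1 + γ₁ + … + γ_{t-1} + γ̄)) and
w̃_{t+1} = (4p·𝟙 + v₁ + … + v_t) / (4(1 + γ₁ + … + γ_t)),
we have w_t ≤ w̃_{t+1} ≤ 2^{1/p} w_t coordinatewise. -/
theorem stmt12 {m : ℕ} (n : ℕ) (p : ℝ) (hp : 1 ≤ p)
    (v : ℕ → (Fin m → ℝ)) (γ : ℕ → ℝ) (γbar : ℝ)
    (hγbarpos : 0 < γbar) (hγbar : γbar ≤ 1 / (4 * p))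
    (hv : ∀ t, t < n → ∀ i, v t i ∈ Set.Icc (0 : ℝ) 1)
    (hγ : ∀ t, t < n → γ t = 0 ∨ γ t = γbar) :
    ∀ t, t < n →
      ∀ i : Fin m,
        ((4 * p + ∑ t' ∈ Finset.range t, v t' i) /
            (4 * (1 + (∑ t' ∈ Finset.range t, γ t') + γbar)))
          ≤ ((4 * p + ∑ t' ∈ Finset.range (t + 1), v t' i) /
              (4 * (1 + ∑ t' ∈ Finset.range (t + 1), γ t'))) ∧
        ((4 * p + ∑ t' ∈ Finset.range (t + 1), v t' i) /
            (4 * (1 + ∑ t' ∈ Finset.range (t + 1), γ t')))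
          ≤ (2 : ℝ) ^ (1 / p) *
            ((4 * p + ∑ t' ∈ Finset.range t, v t' i) /
              (4 * (1 + (∑ t' ∈ Finset.range t, γ t') + γbar))) := by
  intro t ht i
  have hp0 : 0 < p := by linarith
  have hγ_bounds : ∀ s, s < n → 0 ≤ γ s ∧ γ s ≤ γbar := fun s hs => by
    rcases hγ s hs with h | h <;> rw [h] <;> constructor <;> linarith
  have hS := sum_range_nonneg_of_lt ht fun s hs => (hv s hs i).1
  have hG := sum_range_nonneg_of_lt ht fun s hs => (hγ_bounds s hs).1
  obtain ⟨hvt0, hvt1⟩ := hv t ht i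
  obtain ⟨hγt0, hγt⟩ := hγ_bounds t ht
  rw [sum_range_succ, sum_range_succ]
  refine ⟨div_le_div₀ (by linarith) (by linarith) (by linarith) (by linarith), ?_⟩
  have hnum := add_le_one_add_one_div_mul (by positivity : 0 < 4 * p)
    (le_add_of_nonneg_right hS) hvt1
  have hden := one_add_add_le_one_add_mul hG hγt0 hγt
  calc _ ≤ (1 + 1 / (4 * p)) * (1 + γbar) * ((4 * p + ∑ s ∈ range t, v s i) /
        (4 * (1 + ∑ s ∈ range t, γ s + γbar))) :=
        div_le_mul_mul_div (by linarith) (by linarith) (by linarith) (by positivity)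
          (by linarith) (by linarith)
    _ ≤ (1 + 1 / (4 * p)) ^ 2 * ((4 * p + ∑ s ∈ range t, v s i) /
        (4 * (1 + ∑ s ∈ range t, γ s + γbar))) := by
        rw [sq]
        gcongr
    _ ≤ _ := by
        gcongr
        exact one_add_one_div_four_mul_sq_le_two_rpow hp0
end

section
/- Let γ₁, …, γ_n ∈ {0, γ̄} with γ̄ ≤ 1/(4p), ∑_t γ_t = 1, and p ≥ 1 a positive integer. Then there exist times t₁ ≤ t₂ ≤ … ≤ t_p in [n] such that for each i, the partial sum γ₁ + … + γ_{t_i} lies in [2^{i/p} − 1, 2^{i/p} − 1 + γ̄], and consequently for every t with t_{i-1} < t ≤ t_i (setting t₀ = 0), (1 + γ₁+…+γ_{t_i-1} + γ̄)/(1 + γ₁+…+γ_{t-1} + γ̄) ≤ e^{1/p}. -/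
/-!
Take `τᵢ` to be the first time the partial sums `γ_{1:t}` reach `2 ^ (i / p) - 1`. Since the
partial sums climb from `0` to `1` in steps of at most `γ̄`, they overshoot the threshold by at
most `γ̄`. For `τᵢ₋₁ < t ≤ τᵢ` both `γ_{1:t-1}` and `γ_{1:τᵢ-1}` lie in
`[2 ^ ((i - 1) / p) - 1, 2 ^ (i / p) - 1)`, so the ratio is at most `2 ^ (1 / p) ≤ e ^ (1 / p)`.
-/

open Finset Real

def partialSum (γ : ℕ → ℝ) (t : ℕ) : ℝ := ∑ s ∈ Icc 1 t, γ s

section partialSum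

variable {γ : ℕ → ℝ} {n : ℕ}

@[simp]
lemma partialSum_zero : partialSum γ 0 = 0 := by simp [partialSum]

lemma partialSum_succ (t : ℕ) : partialSum γ (t + 1) = partialSum γ t + γ (t + 1) :=
  sum_Icc_succ_top (by omega) γ

lemma partialSum_mono (hγ : ∀ t, 1 ≤ t → t ≤ n → 0 ≤ γ t) {s t : ℕ} (hst : s ≤ t) (htn : t ≤ n) :
    partialSum γ s ≤ partialSum γ t :=
  sum_le_sum_of_subset_of_nonneg (Icc_subset_Icc_right hst) fun x hx _ ↦
    hγ x (mem_Icc.1 hx).1 ((mem_Icc.1 hx).2.trans htn)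

lemma partialSum_le_sub_one_add {δ : ℝ} (hγ : ∀ t, 1 ≤ t → t ≤ n → γ t ≤ δ) {t : ℕ}
    (ht : 1 ≤ t) (htn : t ≤ n) : partialSum γ t ≤ partialSum γ (t - 1) + δ := by
  obtain ⟨s, rfl⟩ : ∃ s, t = s + 1 := ⟨t - 1, by omega⟩
  rw [partialSum_succ, Nat.add_sub_cancel]
  linarith [hγ (s + 1) ht htn]

end partialSum

/-- Junk value `0` when `c` is never reached. -/
noncomputable def firstReach (S : ℕ → ℝ) (c : ℝ) : ℕ := sInf {t | c ≤ S t}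

section firstReach

variable {S : ℕ → ℝ} {c c' : ℝ} {t : ℕ}

lemma firstReach_le (h : c ≤ S t) : firstReach S c ≤ t := Nat.sInf_le h

lemma le_apply_firstReach (h : c ≤ S t) : c ≤ S (firstReach S c) :=
  Nat.sInf_mem (s := {t | c ≤ S t}) ⟨t, h⟩

lemma apply_lt_of_lt_firstReach (h : t < firstReach S c) : S t < c :=
  not_le.1 (Nat.notMem_of_lt_sInf h)

lemma firstReach_mono (hc : c ≤ c') (h : c' ≤ S t) : firstReach S c ≤ firstReach S c' :=
  firstReach_le (hc.trans (le_apply_firstReach h))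

lemma firstReach_pos (h₀ : S 0 < c) (h : c ≤ S t) : 0 < firstReach S c :=
  Nat.pos_of_ne_zero fun h' ↦ (le_apply_firstReach h).not_gt (h' ▸ h₀)

lemma apply_firstReach_le_add {n : ℕ} {δ : ℝ}
    (hstep : ∀ t, 1 ≤ t → t ≤ n → S t ≤ S (t - 1) + δ) (h₀ : S 0 < c) (h : c ≤ S n) :
    S (firstReach S c) ≤ c + δ := by
  have hpos := firstReach_pos h₀ h
  have hprev : S (firstReach S c - 1) < c := apply_lt_of_lt_firstReach (by omega)
  linarith [hstep _ hpos (firstReach_le h)]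

end firstReach

lemma two_rpow_le_exp {x : ℝ} (hx : 0 ≤ x) : (2 : ℝ) ^ x ≤ exp x := by
  rw [rpow_def_of_pos two_pos]
  have hlog : log 2 ≤ 1 := by linarith [log_le_sub_one_of_pos (two_pos (α := ℝ))]
  exact exp_le_exp.2 (mul_le_of_le_one_left hx hlog)

lemma two_rpow_div_eq_mul {i : ℕ} (p : ℕ) (hi : 1 ≤ i) :
    (2 : ℝ) ^ ((i : ℝ) / p) = 2 ^ (((i - 1 : ℕ) : ℝ) / p) * 2 ^ ((1 : ℝ) / p) := by
  rw [← rpow_add two_pos, ← add_div, Nat.cast_sub hi]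
  ring_nf

lemma two_rpow_div_sub_one_le_one {i p : ℕ} (hip : i ≤ p) : (2 : ℝ) ^ ((i : ℝ) / p) - 1 ≤ 1 := by
  have : (2 : ℝ) ^ ((i : ℝ) / p) ≤ 2 ^ (1 : ℝ) :=
    rpow_le_rpow_of_exponent_le one_le_two
      (div_le_one_of_le₀ (by exact_mod_cast hip) (by positivity))
  linarith [rpow_one (2 : ℝ)]

lemma div_le_of_le_mul_add {a r g x y : ℝ} (ha : 0 < a) (hr : 1 ≤ r) (hg : 0 ≤ g)
    (hx : x ≤ a * r + g) (hy : a + g ≤ y) : x / y ≤ r := by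
  rw [div_le_iff₀ (by linarith)]
  nlinarith

/-- The time `τᵢ`. -/
noncomputable def reachTime (γ : ℕ → ℝ) (p i : ℕ) : ℕ :=
  firstReach (partialSum γ) (2 ^ ((i : ℝ) / p) - 1)

section reachTime

variable {γ : ℕ → ℝ} {n p i : ℕ}

lemma two_rpow_div_sub_one_le_partialSum (hsum : partialSum γ n = 1) (hip : i ≤ p) :
    (2 : ℝ) ^ ((i : ℝ) / p) - 1 ≤ partialSum γ n := by
  rw [hsum]
  exact two_rpow_div_sub_one_le_one hip

lemma reachTime_zero : reachTime γ p 0 = 0 :=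
  Nat.le_zero.1 (firstReach_le (by simp))

lemma reachTime_le (hsum : partialSum γ n = 1) (hip : i ≤ p) : reachTime γ p i ≤ n :=
  firstReach_le (two_rpow_div_sub_one_le_partialSum hsum hip)

lemma reachTime_mono {j : ℕ} (hsum : partialSum γ n = 1) (hij : i ≤ j) (hjp : j ≤ p) :
    reachTime γ p i ≤ reachTime γ p j := by
  refine firstReach_mono ?_ (two_rpow_div_sub_one_le_partialSum hsum hjp)
  gcongr
  exact one_le_two

lemma partialSum_zero_lt (hi : 1 ≤ i) (hip : i ≤ p) :
    partialSum γ 0 < 2 ^ ((i : ℝ) / p) - 1 := by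
  have : (1 : ℝ) < 2 ^ ((i : ℝ) / p) :=
    one_lt_rpow one_lt_two (div_pos (by exact_mod_cast hi) (by exact_mod_cast hi.trans hip))
  simpa using this

lemma reachTime_pos (hsum : partialSum γ n = 1) (hi : 1 ≤ i) (hip : i ≤ p) :
    0 < reachTime γ p i :=
  firstReach_pos (partialSum_zero_lt hi hip) (two_rpow_div_sub_one_le_partialSum hsum hip)

lemma partialSum_reachTime_mem_Icc {δ : ℝ} (hγ : ∀ t, 1 ≤ t → t ≤ n → γ t ≤ δ)
    (hsum : partialSum γ n = 1) (hi : 1 ≤ i) (hip : i ≤ p) :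
    partialSum γ (reachTime γ p i) ∈
      Set.Icc ((2 : ℝ) ^ ((i : ℝ) / p) - 1) ((2 : ℝ) ^ ((i : ℝ) / p) - 1 + δ) :=
  have hreach := two_rpow_div_sub_one_le_partialSum hsum hip
  ⟨le_apply_firstReach hreach,
    apply_firstReach_le_add (fun _ ↦ partialSum_le_sub_one_add hγ) (partialSum_zero_lt hi hip)
      hreach⟩

/-- On `(τᵢ₋₁, τᵢ]` the partial sums stay in `[2 ^ ((i - 1) / p) - 1, 2 ^ (i / p) - 1)`. -/
lemma partialSum_reachTime_ratio_le {δ : ℝ} (hγ : ∀ t, 1 ≤ t → t ≤ n → 0 ≤ γ t) (hδ : 0 ≤ δ)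
    (hsum : partialSum γ n = 1) (hi : 1 ≤ i) (hip : i ≤ p) {t : ℕ}
    (ht₁ : reachTime γ p (i - 1) < t) (ht₂ : t ≤ reachTime γ p i) :
    (1 + partialSum γ (reachTime γ p i - 1) + δ) / (1 + partialSum γ (t - 1) + δ) ≤
      2 ^ ((1 : ℝ) / p) := by
  have hnum : partialSum γ (reachTime γ p i - 1) < 2 ^ ((i : ℝ) / p) - 1 :=
    apply_lt_of_lt_firstReach <|
      show reachTime γ p i - 1 < reachTime γ p i by have := reachTime_pos hsum hi hip; omega
  have hden : (2 : ℝ) ^ (((i - 1 : ℕ) : ℝ) / p) - 1 ≤ partialSum γ (t - 1) :=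
    (le_apply_firstReach (two_rpow_div_sub_one_le_partialSum hsum (by omega))).trans
      (partialSum_mono hγ (show reachTime γ p (i - 1) ≤ t - 1 by omega)
        (by have := reachTime_le hsum hip; omega))
  rw [two_rpow_div_eq_mul p hi] at hnum
  exact div_le_of_le_mul_add (rpow_pos_of_pos two_pos (((i - 1 : ℕ) : ℝ) / p))
    (one_le_rpow one_le_two (by positivity)) hδ (by linarith) (by linarith)

end reachTime

theorem stmt16_general (n p : ℕ) (γ : ℕ → ℝ) (γbar : ℝ)
    (hγbarpos : 0 < γbar)
    (hγ : ∀ t, 1 ≤ t → t ≤ n → γ t = 0 ∨ γ t = γbar)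
    (hsum : ∑ t ∈ Finset.Icc 1 n, γ t = 1) :
    ∃ τ : ℕ → ℕ, τ 0 = 0 ∧
      (∀ i, 1 ≤ i → i ≤ p →
        τ (i - 1) ≤ τ i ∧ 1 ≤ τ i ∧ τ i ≤ n ∧
        (∑ t ∈ Finset.Icc 1 (τ i), γ t) ∈
          Set.Icc ((2 : ℝ) ^ ((i : ℝ) / p) - 1) ((2 : ℝ) ^ ((i : ℝ) / p) - 1 + γbar)) ∧
      (∀ i, 1 ≤ i → i ≤ p → ∀ t, τ (i - 1) < t → t ≤ τ i →
        (1 + (∑ t' ∈ Finset.Icc 1 (τ i - 1), γ t') + γbar) /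
            (1 + (∑ t' ∈ Finset.Icc 1 (t - 1), γ t') + γbar)
          ≤ Real.exp (1 / (p : ℝ))) := by
  have hγ_nonneg : ∀ t, 1 ≤ t → t ≤ n → 0 ≤ γ t := fun t h₁ h₂ ↦
    (hγ t h₁ h₂).elim (·.ge) (· ▸ hγbarpos.le)
  have hγ_le : ∀ t, 1 ≤ t → t ≤ n → γ t ≤ γbar := fun t h₁ h₂ ↦
    (hγ t h₁ h₂).elim (· ▸ hγbarpos.le) (·.le)
  refine ⟨reachTime γ p, reachTime_zero, fun i hi hip ↦ ⟨reachTime_mono hsum (by omega) hip,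
    reachTime_pos hsum hi hip, reachTime_le hsum hip,
    partialSum_reachTime_mem_Icc hγ_le hsum hi hip⟩, fun i hi hip t ht₁ ht₂ ↦ ?_⟩
  exact (partialSum_reachTime_ratio_le hγ_nonneg hγbarpos.le hsum hi hip ht₁ ht₂).trans
    (two_rpow_le_exp (by positivity))

/-- with γ₁,…,γ_n ∈ {0, γ̄}, 0 < γ̄ ≤ 1/(4p), ∑γ_t = 1 and p ≥ 1 an integer, there
are times 0 = τ₀ ≤ τ₁ ≤ … ≤ τ_p in [n] with γ_{1:τᵢ} ∈ [2^{i/p} − 1, 2^{i/p} − 1 + γ̄], and for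
every t with τ_{i-1} < t ≤ τᵢ one has
(1 + γ_{1:τᵢ−1} + γ̄)/(1 + γ_{1:t−1} + γ̄) ≤ e^{1/p}. -/
theorem stmt16 (n p : ℕ) (hp : 1 ≤ p) (γ : ℕ → ℝ) (γbar : ℝ)
    (hγbarpos : 0 < γbar) (hγbar : γbar ≤ 1 / (4 * (p : ℝ)))
    (hγ : ∀ t, 1 ≤ t → t ≤ n → γ t = 0 ∨ γ t = γbar)
    (hsum : ∑ t ∈ Finset.Icc 1 n, γ t = 1) :
    ∃ τ : ℕ → ℕ, τ 0 = 0 ∧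
      (∀ i, 1 ≤ i → i ≤ p →
        τ (i - 1) ≤ τ i ∧ 1 ≤ τ i ∧ τ i ≤ n ∧
        (∑ t ∈ Finset.Icc 1 (τ i), γ t) ∈
          Set.Icc ((2 : ℝ) ^ ((i : ℝ) / p) - 1) ((2 : ℝ) ^ ((i : ℝ) / p) - 1 + γbar)) ∧
      (∀ i, 1 ≤ i → i ≤ p → ∀ t, τ (i - 1) < t → t ≤ τ i →
        (1 + (∑ t' ∈ Finset.Icc 1 (τ i - 1), γ t') + γbar) /
            (1 + (∑ t' ∈ Finset.Icc 1 (t - 1), γ t') + γbar)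
          ≤ Real.exp (1 / (p : ℝ))) :=
  stmt16_general n p γ γbar hγbarpos hγ hsum
end

section
/- (Adversarial domination bound) Let ψ : ℝ₊^m → ℝ₊ be convex, non-decreasing, ψ(0)=0, superadditive (ψ(u+v) ≥ ψ(u)+ψ(v)), with conjugate satisfying ψ*(δy) ≤ δ·ψ*(y) for δ ∈ (0,1]. Let y₁, …, y_n ∈ ℝ₊^m, v₁*, …, v_n* ∈ ℝ₊^m, and suppose there is a set T ⊆ [n] with |T| = p such that for every t there exists t' ∈ T with y_t ≤ e·y_{t'} coordinatewise. Then for all α ≥ 1: ∑_t ⟨y_t, v_t*⟩ ≤ e·ψ(α ∑_t v_t*) + (ep/α)·max_t ψ*(y_t). -/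
/-!
Send every step `t` to a step `σ t ∈ T` dominating it and let `w t'` be the sum of the `v_t*`
with `σ t = t'`. Domination gives `∑ ⟨y_t, v_t*⟩ ≤ e ∑_{t' ∈ T} ⟨y_{t'}, w_{t'}⟩`. Fenchel's
inequality for the pair `(α w_{t'}, y_{t'} / α)`, together with `ψ*(y / α) ≤ ψ*(y) / α`, bounds
each term by `ψ(α w_{t'}) + ψ*(y_{t'}) / α`; superadditivity collects the `ψ`-terms into
`ψ(α ∑ v_t*)`, and each of the `p` conjugate terms is at most `max_t ψ*(y_t)`.
-/

open Finset

theorem sum_le_of_superadditive_on_nonneg {ι E : Type*} [AddCommMonoid E] [PartialOrder E]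
    [IsOrderedAddMonoid E] (ψ : E → ℝ) (h0 : 0 ≤ ψ 0)
    (hsuper : ∀ u v, 0 ≤ u → 0 ≤ v → ψ u + ψ v ≤ ψ (u + v))
    (s : Finset ι) (g : ι → E) (hg : ∀ i ∈ s, 0 ≤ g i) :
    ∑ i ∈ s, ψ (g i) ≤ ψ (∑ i ∈ s, g i) :=
  le_sum_of_subadditive_on_pred (N := ℝᵒᵈ) (fun u => OrderDual.toDual (ψ u)) (0 ≤ ·) h0
    (fun x y hx hy => hsuper x y hx hy) (fun _ _ => add_nonneg) g hg

theorem sum_le_card_mul_ciSup {ι : Type*} [Finite ι] (f : ι → ℝ) (s : Finset ι) :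
    ∑ i ∈ s, f i ≤ s.card * ⨆ i, f i := by
  rw [← nsmul_eq_mul]
  exact sum_le_card_nsmul _ _ _ fun i _ => le_ciSup (Set.finite_range f).bddAbove i

section Fenchel

variable {m : ℕ} {ψ : (Fin m → ℝ) → ℝ}

theorem dotProduct_sub_le_conjStar {y : Fin m → ℝ}
    (hbdd : BddAbove {z : ℝ | ∃ u : Fin m → ℝ, 0 ≤ u ∧ z = (∑ i, u i * y i) - ψ u})
    {u : Fin m → ℝ} (hu : 0 ≤ u) : u ⬝ᵥ y - ψ u ≤ conjStar ψ y :=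
  le_csSup hbdd ⟨u, hu, rfl⟩

theorem dotProduct_le_smul_add_inv_mul_conjStar {y w : Fin m → ℝ} {α : ℝ} (hα : 0 < α)
    (hbdd : BddAbove {z : ℝ | ∃ u : Fin m → ℝ, 0 ≤ u ∧ z = (∑ i, u i * (α⁻¹ • y) i) - ψ u})
    (hscale : conjStar ψ (α⁻¹ • y) ≤ α⁻¹ * conjStar ψ y) (hw : 0 ≤ w) :
    y ⬝ᵥ w ≤ ψ (α • w) + α⁻¹ * conjStar ψ y := by
  have hfenchel := dotProduct_sub_le_conjStar hbdd (smul_nonneg hα.le hw)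
  rw [smul_dotProduct, dotProduct_smul, smul_smul, mul_inv_cancel₀ hα.ne', one_smul,
    dotProduct_comm] at hfenchel
  linarith

end Fenchel

theorem sum_dotProduct_le_mul_sum_fiberwise {ι κ : Type*} [Fintype ι] [DecidableEq ι] [Fintype κ]
    {y v : ι → κ → ℝ} {c : ℝ} {σ : ι → ι} {T : Finset ι} (hσT : ∀ t, σ t ∈ T)
    (hσ : ∀ t i, y t i ≤ c * y (σ t) i) (hv : ∀ t, 0 ≤ v t) :
    ∑ t, y t ⬝ᵥ v t ≤ c * ∑ t' ∈ T, y t' ⬝ᵥ ∑ t with σ t = t', v t := by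
  calc ∑ t, y t ⬝ᵥ v t ≤ ∑ t, (c • y (σ t)) ⬝ᵥ v t := by
        gcongr with t
        exact dotProduct_le_dotProduct_of_nonneg_right (hσ t) (hv t)
    _ = c * ∑ t' ∈ T, y t' ⬝ᵥ ∑ t with σ t = t', v t := by
        simp only [smul_dotProduct, smul_eq_mul, ← mul_sum, dotProduct_sum]
        rw [← sum_fiberwise_of_maps_to (fun t _ => hσT t)]
        refine congrArg _ (sum_congr rfl fun t' _ => sum_congr rfl fun t ht => ?_)
        rw [(mem_filter.mp ht).2]

theorem stmt17_general {m : ℕ} (n p : ℕ)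
    (ψ : (Fin m → ℝ) → ℝ)
    (hzero : ψ 0 = 0)
    (hsuper : ∀ u v : Fin m → ℝ, 0 ≤ u → 0 ≤ v → ψ u + ψ v ≤ ψ (u + v))
    (hbdd : ∀ y : Fin m → ℝ, BddAbove {z : ℝ | ∃ u : Fin m → ℝ, 0 ≤ u ∧ z = (∑ i, u i * y i) - ψ u})
    (hconjscale : ∀ y : Fin m → ℝ, 0 ≤ y → ∀ δ : ℝ, 0 < δ → δ ≤ 1 →
      conjStar ψ (δ • y) ≤ δ * conjStar ψ y)
    (y : Fin n → (Fin m → ℝ)) (vstar : Fin n → (Fin m → ℝ))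
    (hy : ∀ t, 0 ≤ y t) (hv : ∀ t, 0 ≤ vstar t)
    (T : Finset (Fin n)) (hT : T.card = p)
    (hdom : ∀ t : Fin n, ∃ t' ∈ T, ∀ i, y t i ≤ Real.exp 1 * y t' i) :
    ∀ α : ℝ, 1 ≤ α →
      ∑ t, ∑ i, y t i * vstar t i ≤
        Real.exp 1 * ψ (α • ∑ t, vstar t) +
          (Real.exp 1 * p / α) * ⨆ t, conjStar ψ (y t) := by
  intro α hα
  have hα0 : 0 < α := one_pos.trans_le hα
  choose σ hσT hσ using hdom
  set w : Fin n → Fin m → ℝ := fun t' => ∑ t with σ t = t', vstar t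
  have hw : ∀ t', 0 ≤ w t' := fun t' => sum_nonneg fun t _ => hv t
  have hwsum : ∑ t' ∈ T, w t' = ∑ t, vstar t := sum_fiberwise_of_maps_to (fun t _ => hσT t) vstar
  calc ∑ t, y t ⬝ᵥ vstar t ≤ Real.exp 1 * ∑ t' ∈ T, y t' ⬝ᵥ w t' :=
        sum_dotProduct_le_mul_sum_fiberwise hσT hσ hv
    _ ≤ Real.exp 1 * ∑ t' ∈ T, (ψ (α • w t') + α⁻¹ * conjStar ψ (y t')) := by
        gcongr with t'
        exact dotProduct_le_smul_add_inv_mul_conjStar hα0 (hbdd _)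
          (hconjscale _ (hy t') _ (inv_pos.2 hα0) (inv_le_one_of_one_le₀ hα)) (hw t')
    _ ≤ Real.exp 1 * (ψ (α • ∑ t, vstar t) + α⁻¹ * (p * ⨆ t, conjStar ψ (y t))) := by
        rw [sum_add_distrib, ← mul_sum, ← hwsum, smul_sum, ← hT]
        gcongr
        · exact sum_le_of_superadditive_on_nonneg ψ hzero.ge hsuper T _
            fun t' _ => smul_nonneg hα0.le (hw t')
        · exact sum_le_card_mul_ciSup _ T
    _ = _ := by ring

/-- Adversarial domination bound: for ψ convex, non-decreasing, ψ(0)=0,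
superadditive, with ψ*(δy) ≤ δψ*(y) for δ ∈ (0,1], and vectors y_t, v_t* ≥ 0 such that a set T
of p time steps dominates all the y_t's up to a factor e, one has for all α ≥ 1:
∑_t ⟨y_t, v_t*⟩ ≤ e·ψ(α ∑_t v_t*) + (ep/α)·max_t ψ*(y_t). -/
theorem stmt17 {m : ℕ} (n p : ℕ) (hn : 0 < n)
    (ψ : (Fin m → ℝ) → ℝ)
    (hconv : ConvexOn ℝ {u : Fin m → ℝ | 0 ≤ u} ψ)
    (hmono : ∀ u v : Fin m → ℝ, 0 ≤ u → u ≤ v → ψ u ≤ ψ v)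
    (hψnonneg : ∀ u : Fin m → ℝ, 0 ≤ u → 0 ≤ ψ u)
    (hzero : ψ 0 = 0)
    (hsuper : ∀ u v : Fin m → ℝ, 0 ≤ u → 0 ≤ v → ψ u + ψ v ≤ ψ (u + v))
    (hbdd : ∀ y : Fin m → ℝ, BddAbove {z : ℝ | ∃ u : Fin m → ℝ, 0 ≤ u ∧ z = (∑ i, u i * y i) - ψ u})
    (hconjscale : ∀ y : Fin m → ℝ, 0 ≤ y → ∀ δ : ℝ, 0 < δ → δ ≤ 1 →
      conjStar ψ (δ • y) ≤ δ * conjStar ψ y)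
    (y : Fin n → (Fin m → ℝ)) (vstar : Fin n → (Fin m → ℝ))
    (hy : ∀ t, 0 ≤ y t) (hv : ∀ t, 0 ≤ vstar t)
    (T : Finset (Fin n)) (hT : T.card = p)
    (hdom : ∀ t : Fin n, ∃ t' ∈ T, ∀ i, y t i ≤ Real.exp 1 * y t' i) :
    ∀ α : ℝ, 1 ≤ α →
      ∑ t, ∑ i, y t i * vstar t i ≤
        Real.exp 1 * ψ (α • ∑ t, vstar t) +
          (Real.exp 1 * p / α) * ⨆ t, conjStar ψ (y t) :=
  stmt17_general n p ψ hzero hsuper hbdd hconjscale y vstar hy hv T hT hdom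
end

section
/- (Stochastic linearization bound) Let ψ : ℝ₊^m → ℝ₊ be convex with conjugate ψ*, and let (v_t*)_{t∈S} be i.i.d. random vectors in ℝ₊^m indexed by a set S of size s, with 𝔼 v_t* = μ. Let (y_t)_{t∈S} be random vectors in ℝ₊^m such that y_t is independent of v_t* for each t (y_t measurable w.r.t. the history before time t). Then with β = n/s: 𝔼 ∑_{t∈S} [⟨y_t, v_t*⟩ − (1/n)ψ*(y_t)] ≤ (1/β)·ψ(β·s·μ). -/
open Finset MeasureTheory

open ProbabilityTheory

/-!
Since `y_t` is independent of `v_t*`, the expectation of `⟨y_t, v_t*⟩` equals that of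
`⟨y_t, μ⟩`. Pointwise, the Fenchel–Young inequality at `u = nμ` gives
`⟨y, μ⟩ - ψ*(y)/n ≤ ψ(nμ)/n`, so each of the `s` terms has expectation at most `ψ(nμ)/n`;
finally `nμ = β·s·μ`.
-/

section FenchelYoung

variable {m : ℕ} {ψ : (Fin m → ℝ) → ℝ}

theorem sum_mul_sub_le_conjStar {u y : Fin m → ℝ} (hu : 0 ≤ u)
    (hbdd : BddAbove {z : ℝ | ∃ u : Fin m → ℝ, 0 ≤ u ∧ z = (∑ i, u i * y i) - ψ u}) :
    (∑ i, u i * y i) - ψ u ≤ conjStar ψ y :=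
  le_csSup hbdd ⟨u, hu, rfl⟩

theorem sum_mul_sub_one_div_mul_conjStar_le {c : ℝ} (hc : 0 < c) {μ y : Fin m → ℝ}
    (hμ : 0 ≤ μ)
    (hbdd : BddAbove {z : ℝ | ∃ u : Fin m → ℝ, 0 ≤ u ∧ z = (∑ i, u i * y i) - ψ u}) :
    (∑ i, y i * μ i) - 1 / c * conjStar ψ y ≤ 1 / c * ψ (c • μ) := by
  have hFY := sum_mul_sub_le_conjStar (smul_nonneg hc.le hμ) hbdd
  have hsum : ∑ i, (c • μ) i * y i = c * ∑ i, y i * μ i := by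
    simp only [Pi.smul_apply, smul_eq_mul, mul_sum]
    exact sum_congr rfl fun i _ => by ring
  rw [hsum] at hFY
  rw [← mul_le_mul_iff_of_pos_left hc]
  field_simp
  linarith

end FenchelYoung

section Expectation

variable {Ω : Type*} [MeasurableSpace Ω] {P : Measure Ω} {m : ℕ}

theorem ProbabilityTheory.IndepFun.comp_eval {Y V : Ω → Fin m → ℝ} (hindep : IndepFun Y V P)
    (i : Fin m) : IndepFun (fun ω => Y ω i) (fun ω => V ω i) P :=
  hindep.comp (measurable_pi_apply i) (measurable_pi_apply i)

theorem ProbabilityTheory.IndepFun.integrable_fun_mul {X Y : Ω → ℝ} (hXY : IndepFun X Y P)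
    (hX : Integrable X P) (hY : Integrable Y P) : Integrable (fun ω => X ω * Y ω) P :=
  hXY.integrable_mul hX hY

theorem integrable_sum_mul_of_indepFun {Y V : Ω → Fin m → ℝ} (hindep : IndepFun Y V P)
    (hY : ∀ i, Integrable (fun ω => Y ω i) P) (hV : ∀ i, Integrable (fun ω => V ω i) P) :
    Integrable (fun ω => ∑ i, Y ω i * V ω i) P :=
  integrable_finsetSum _ fun i _ => (hindep.comp_eval i).integrable_fun_mul (hY i) (hV i)

theorem integral_sum_mul_eq_of_indepFun {Y V : Ω → Fin m → ℝ} {μ : Fin m → ℝ}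
    (hindep : IndepFun Y V P) (hY : ∀ i, Integrable (fun ω => Y ω i) P)
    (hV : ∀ i, Integrable (fun ω => V ω i) P) (hmean : ∀ i, ∫ ω, V ω i ∂P = μ i) :
    ∫ ω, ∑ i, Y ω i * V ω i ∂P = ∫ ω, ∑ i, Y ω i * μ i ∂P := by
  rw [integral_finsetSum _ fun i _ => (hindep.comp_eval i).integrable_fun_mul (hY i) (hV i),
    integral_finsetSum _ fun i _ => (hY i).mul_const _]
  refine sum_congr rfl fun i _ => ?_
  rw [(hindep.comp_eval i).integral_fun_mul_eq_mul_integral (hY i).aestronglyMeasurable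
    (hV i).aestronglyMeasurable, hmean i, integral_mul_const]

theorem nonneg_of_integral_eq {V : Ω → Fin m → ℝ} {μ : Fin m → ℝ} (hV : ∀ ω, 0 ≤ V ω)
    (hmean : ∀ i, ∫ ω, V ω i ∂P = μ i) : 0 ≤ μ := fun i =>
  hmean i ▸ integral_nonneg fun ω => hV ω i

variable [IsProbabilityMeasure P] {ψ : (Fin m → ℝ) → ℝ}

theorem integral_sum_mul_sub_one_div_mul_conjStar_le {c : ℝ} (hc : 0 < c)
    {Y V : Ω → Fin m → ℝ} {μ : Fin m → ℝ} (hμ : 0 ≤ μ)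
    (hbdd : ∀ y : Fin m → ℝ,
      BddAbove {z : ℝ | ∃ u : Fin m → ℝ, 0 ≤ u ∧ z = (∑ i, u i * y i) - ψ u})
    (hindep : IndepFun Y V P) (hY : ∀ i, Integrable (fun ω => Y ω i) P)
    (hV : ∀ i, Integrable (fun ω => V ω i) P) (hmean : ∀ i, ∫ ω, V ω i ∂P = μ i)
    (hconj : Integrable (fun ω => conjStar ψ (Y ω)) P) :
    ∫ ω, (∑ i, Y ω i * V ω i) - 1 / c * conjStar ψ (Y ω) ∂P ≤ 1 / c * ψ (c • μ) := by
  have hYμ : Integrable (fun ω => ∑ i, Y ω i * μ i) P :=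
    integrable_finsetSum _ fun i _ => (hY i).mul_const _
  have hYV := integrable_sum_mul_of_indepFun hindep hY hV
  calc ∫ ω, (∑ i, Y ω i * V ω i) - 1 / c * conjStar ψ (Y ω) ∂P
      = ∫ ω, (∑ i, Y ω i * μ i) - 1 / c * conjStar ψ (Y ω) ∂P := by
        rw [integral_sub hYV (hconj.const_mul _), integral_sub hYμ (hconj.const_mul _),
          integral_sum_mul_eq_of_indepFun hindep hY hV hmean]
    _ ≤ ∫ _, 1 / c * ψ (c • μ) ∂P :=
        integral_mono (hYμ.sub (hconj.const_mul _)) (integrable_const _) fun ω =>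
          sum_mul_sub_one_div_mul_conjStar_le hc hμ (hbdd (Y ω))
    _ = 1 / c * ψ (c • μ) := by simp

end Expectation

theorem stmt19_general {m : ℕ} {Ω : Type*} [MeasurableSpace Ω] (P : Measure Ω)
    [IsProbabilityMeasure P]
    (n s : ℕ) (hs : 0 < s) (hsn : s ≤ n)
    (ψ : (Fin m → ℝ) → ℝ)
    (hbdd : ∀ y : Fin m → ℝ, BddAbove {z : ℝ | ∃ u : Fin m → ℝ, 0 ≤ u ∧ z = (∑ i, u i * y i) - ψ u})
    (v : Fin s → Ω → (Fin m → ℝ)) (y : Fin s → Ω → (Fin m → ℝ)) (μv : Fin m → ℝ)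
    (hvnonneg : ∀ t ω, 0 ≤ v t ω)
    (hmean : ∀ t i, ∫ ω, v t ω i ∂P = μv i)
    (hindep : ∀ t, ProbabilityTheory.IndepFun (y t) (v t) P)
    (hIntv : ∀ t i, Integrable (fun ω => v t ω i) P)
    (hInty : ∀ t i, Integrable (fun ω => y t ω i) P)
    (hIntconj : ∀ t, Integrable (fun ω => conjStar ψ (y t ω)) P) :
    (∫ ω, ∑ t, ((∑ i, y t ω i * v t ω i) - (1 / (n : ℝ)) * conjStar ψ (y t ω)) ∂P)
      ≤ ((s : ℝ) / n) * ψ (((n : ℝ) / s) • ((s : ℝ) • μv)) := by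
  have hs' : (s : ℝ) ≠ 0 := by exact_mod_cast hs.ne'
  have hn : (0 : ℝ) < n := by exact_mod_cast hs.trans_le hsn
  have hμ : 0 ≤ μv := nonneg_of_integral_eq (hvnonneg ⟨0, hs⟩) (hmean ⟨0, hs⟩)
  have hterm := fun t => integral_sum_mul_sub_one_div_mul_conjStar_le hn hμ hbdd (hindep t)
    (hInty t) (hIntv t) (hmean t) (hIntconj t)
  have hIntterm : ∀ t, Integrable
      (fun ω => (∑ i, y t ω i * v t ω i) - 1 / (n : ℝ) * conjStar ψ (y t ω)) P := fun t =>
    (integrable_sum_mul_of_indepFun (hindep t) (hInty t) (hIntv t)).sub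
      ((hIntconj t).const_mul _)
  rw [integral_finsetSum _ fun t _ => hIntterm t, smul_smul, div_mul_cancel₀ _ hs']
  calc ∑ t, ∫ ω, (∑ i, y t ω i * v t ω i) - 1 / (n : ℝ) * conjStar ψ (y t ω) ∂P
      ≤ ∑ _t : Fin s, 1 / (n : ℝ) * ψ ((n : ℝ) • μv) := sum_le_sum fun t _ => hterm t
    _ = (s : ℝ) / n * ψ ((n : ℝ) • μv) := by simp [div_eq_mul_inv, mul_assoc]

/-- Stochastic linearization bound: with i.i.d. non-negative random vectors
(v_t*)_{t ∈ S}, |S| = s, 𝔼 v_t* = μ, and random non-negative y_t independent of v_t*, for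
β = n/s:  𝔼 ∑_{t ∈ S} [⟨y_t, v_t*⟩ − (1/n)ψ*(y_t)] ≤ (1/β)·ψ(β·s·μ). -/
theorem stmt19 {m : ℕ} {Ω : Type*} [MeasurableSpace Ω] (P : Measure Ω)
    [IsProbabilityMeasure P]
    (n s : ℕ) (hs : 0 < s) (hsn : s ≤ n)
    (ψ : (Fin m → ℝ) → ℝ)
    (hconv : ConvexOn ℝ {u : Fin m → ℝ | 0 ≤ u} ψ)
    (hmono : ∀ u v : Fin m → ℝ, 0 ≤ u → u ≤ v → ψ u ≤ ψ v)
    (hψnonneg : ∀ u : Fin m → ℝ, 0 ≤ u → 0 ≤ ψ u)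
    (hzero : ψ 0 = 0)
    (hbdd : ∀ y : Fin m → ℝ, BddAbove {z : ℝ | ∃ u : Fin m → ℝ, 0 ≤ u ∧ z = (∑ i, u i * y i) - ψ u})
    (v : Fin s → Ω → (Fin m → ℝ)) (y : Fin s → Ω → (Fin m → ℝ)) (μv : Fin m → ℝ)
    (hvnonneg : ∀ t ω, 0 ≤ v t ω) (hynonneg : ∀ t ω, 0 ≤ y t ω)
    (hmean : ∀ t i, ∫ ω, v t ω i ∂P = μv i)
    (hident : ∀ t t' : Fin s, ProbabilityTheory.IdentDistrib (v t) (v t') P P)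
    (hiid : ProbabilityTheory.iIndepFun v P)
    (hindep : ∀ t, ProbabilityTheory.IndepFun (y t) (v t) P)
    (hIntv : ∀ t i, Integrable (fun ω => v t ω i) P)
    (hInty : ∀ t i, Integrable (fun ω => y t ω i) P)
    (hIntyv : ∀ t i, Integrable (fun ω => y t ω i * v t ω i) P)
    (hIntconj : ∀ t, Integrable (fun ω => conjStar ψ (y t ω)) P) :
    (∫ ω, ∑ t, ((∑ i, y t ω i * v t ω i) - (1 / (n : ℝ)) * conjStar ψ (y t ω)) ∂P)
      ≤ ((s : ℝ) / n) * ψ (((n : ℝ) / s) • ((s : ℝ) • μv)) :=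
  stmt19_general P n s hs hsn ψ hbdd v y μv hvnonneg hmean hindep hIntv hInty hIntconj
end
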